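/- arXiv:2411.14863 — 2 statements merged into one kernel-verified Lean document; each statement's English description precedes it below -/
import Mathlib

section
/- Let E be a real normed vector space, fix x0, x1, ε ∈ E and τ > 0, and define ψ(t) := (1−t)•x0 + t•x1 + √(t(1−t)τ)•ε and μ(t) := (1−t)•x0 + t•x1. Then for every t ∈ (0,1), ψ is differentiable at t with derivative ((1/2 − t)/(t(1−t)))•(ψ(t) − μ(t)) + (x1 − x0); that is, the Schrödinger Bridge conditional trajectory ψ solves the ODE dx/dt = u(x | x0, x1, t) with the conditional vector field u(x | x0, x1, t) := ((1/2 − t)/(t(1−t)))·(x − μ(t)) + (x1 − x0). -/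
/-- The Schrödinger Bridge conditional trajectory
`ψ(t) = (1−t)•x0 + t•x1 + √(t(1−t)τ)•ε` solves the ODE
`dx/dt = ((1/2 − t)/(t(1−t)))•(x − μ(t)) + (x1 − x0)`
where `μ(t) = (1−t)•x0 + t•x1`, for every `t ∈ (0,1)`. -/
theorem sb_conditional_trajectory_solves_ode
    {E : Type*} [NormedAddCommGroup E] [NormedSpace ℝ E]
    (x0 x1 ε : E) (τ : ℝ) (hτ : 0 < τ)
    (ψ μ : ℝ → E)
    (hψ : ψ = fun t : ℝ => (1 - t) • x0 + t • x1 + Real.sqrt (t * (1 - t) * τ) • ε)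
    (hμ : μ = fun t : ℝ => (1 - t) • x0 + t • x1) :
    ∀ t ∈ Set.Ioo (0:ℝ) 1,
      HasDerivAt ψ (((1 / 2 - t) / (t * (1 - t))) • (ψ t - μ t) + (x1 - x0)) t := by
  intro t ht
  obtain ⟨ht0, ht1⟩ := ht
  have htt : 0 < t * (1 - t) := mul_pos ht0 (by linarith)
  have harg : 0 < t * (1 - t) * τ := mul_pos htt hτ
  have hs : 0 < Real.sqrt (t * (1 - t) * τ) := Real.sqrt_pos.mpr harg
  set s := Real.sqrt (t * (1 - t) * τ) with hsdef
  have hsq : s ^ 2 = t * (1 - t) * τ := Real.sq_sqrt harg.le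
  -- derivative of inner function
  have hinner : HasDerivAt (fun t : ℝ => t * (1 - t) * τ) ((1 - 2 * t) * τ) t := by
    have : HasDerivAt (fun t : ℝ => t * (1 - t) * τ)
        ((1 * (1 - t) + t * (0 - 1)) * τ + t * (1 - t) * 0) t :=
      ((hasDerivAt_id t).mul ((hasDerivAt_const t 1).sub (hasDerivAt_id t))).mul
        (hasDerivAt_const t τ)
    convert this using 1; ring
  have hsqrt : HasDerivAt (fun t : ℝ => Real.sqrt (t * (1 - t) * τ))
      (1 / (2 * s) * ((1 - 2 * t) * τ)) t :=
    (Real.hasDerivAt_sqrt harg.ne').comp t hinner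
  have hlin : HasDerivAt (fun t : ℝ => (1 - t) • x0 + t • x1)
      ((-1 : ℝ) • x0 + (1 : ℝ) • x1) t := by
    simpa [Pi.add_def] using (((hasDerivAt_const t (1:ℝ)).sub (hasDerivAt_id t)).smul_const x0).add
      ((hasDerivAt_id t).smul_const x1)
  have hψd : HasDerivAt ψ
      (((-1 : ℝ) • x0 + (1 : ℝ) • x1) + (1 / (2 * s) * ((1 - 2 * t) * τ)) • ε) t := by
    rw [hψ]
    exact hlin.add (hsqrt.smul_const ε)
  convert hψd using 1
  have hdiff : ψ t - μ t = s • ε := by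
    rw [hψ, hμ]; simp [hsdef]
  rw [hdiff, smul_smul]
  have hcoeff : (1 / 2 - t) / (t * (1 - t)) * s = 1 / (2 * s) * ((1 - 2 * t) * τ) := by
    field_simp
    nlinarith [hsq, hs]
  rw [hcoeff]
  simp only [neg_smul, one_smul]
  abel
end

section
/- Let (Ω, ℱ, μ) be a probability space, 𝒢 a sub-σ-algebra of ℱ, and let M, ε : Ω → ℝ^d be integrable random vectors. Fix σ > 0 and set X := M + σ•ε; assume X is 𝒢-measurable. Let ᾱ := 1/(σ² + 1) and Y := √ᾱ • X. Then μ-almost everywhere, (1/√ᾱ) • (Y − √(1 − ᾱ) • μ[ε | 𝒢]) = X − σ • μ[ε | 𝒢] = μ[M | 𝒢]. That is, applying Tweedie's formula to the SNR-matched VP variable Y recovers the correct posterior-mean signal predictor for the SB variable X. -/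
open MeasureTheory

/-! Since `X = M + σ • ε` is `𝒢`-measurable, `μ[X | 𝒢] = X`, so linearity of the conditional
expectation gives `μ[M | 𝒢] = X - σ • μ[ε | 𝒢]`. The SNR matching makes `1 - ᾱ = σ² ᾱ`, i.e.
`√(1 - ᾱ) = σ √ᾱ`, and then Tweedie's formula for `Y = √ᾱ • X` collapses to `X - σ • μ[ε | 𝒢]`. -/

theorem condExp_eq_add_smul_sub_smul_condExp
    {Ω E : Type*} [NormedAddCommGroup E] [NormedSpace ℝ E] [CompleteSpace E]
    {m m₀ : MeasurableSpace Ω} {μ : Measure Ω} (hm : m ≤ m₀) [SigmaFinite (μ.trim hm)]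
    {M ε : Ω → E} (c : ℝ) (hM : Integrable M μ) (hε : Integrable ε μ)
    (hX : StronglyMeasurable[m] (M + c • ε)) :
    μ[M | m] =ᵐ[μ] M + c • ε - c • μ[ε | m] := by
  have hcε : Integrable (c • ε) μ := hε.smul c
  have hMX : M = (M + c • ε) - c • ε := (add_sub_cancel_right M (c • ε)).symm
  calc μ[M | m] = μ[(M + c • ε) - c • ε | m] := congrArg _ hMX
    _ =ᵐ[μ] μ[M + c • ε | m] - μ[c • ε | m] := condExp_sub (hM.add hcε) hcε m
    _ =ᵐ[μ] M + c • ε - c • μ[ε | m] := by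
      rw [condExp_of_stronglyMeasurable hm hX (hM.add hcε)]
      exact Filter.EventuallyEq.rfl.sub (condExp_smul c ε m)

theorem Real.sqrt_one_sub_one_div_sq_add_one {σ : ℝ} (hσ : 0 ≤ σ) :
    √(1 - 1 / (σ ^ 2 + 1)) = σ * √(1 / (σ ^ 2 + 1)) := by
  have hsnr : 1 - 1 / (σ ^ 2 + 1) = σ ^ 2 * (1 / (σ ^ 2 + 1)) := by
    field_simp
    ring
  rw [hsnr, Real.sqrt_mul (sq_nonneg σ), Real.sqrt_sq hσ]

theorem one_div_smul_smul_sub_mul_smul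
    {E : Type*} [AddCommGroup E] [Module ℝ E] {a : ℝ} (ha : a ≠ 0) (σ : ℝ) (x e : E) :
    (1 / a) • (a • x - (σ * a) • e) = x - σ • e := by
  rw [smul_sub, smul_smul, smul_smul, one_div_mul_cancel ha, mul_comm σ, ← mul_assoc,
    one_div_mul_cancel ha, one_smul, one_mul]

/-- Applying Tweedie's formula to the SNR-matched VP variable `Y = √ᾱ • X`, where
`X = M + σ•ε` is 𝒢-measurable and `ᾱ = 1/(σ² + 1)`, recovers the correct posterior-mean
signal predictor: μ-a.e.,
`(1/√ᾱ) • (Y − √(1−ᾱ) • μ[ε|𝒢]) = X − σ • μ[ε|𝒢] = μ[M|𝒢]`. -/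
theorem tweedie_snr_matched_recovers_signal
    {Ω : Type*} {d : ℕ} [ℱ : MeasurableSpace Ω] {μ : Measure Ω} [IsProbabilityMeasure μ]
    (𝒢 : MeasurableSpace Ω) (h𝒢 : 𝒢 ≤ ℱ)
    (M ε : Ω → EuclideanSpace ℝ (Fin d))
    (hM : Integrable M μ) (hε : Integrable ε μ)
    (σ : ℝ) (hσ : 0 < σ)
    (X : Ω → EuclideanSpace ℝ (Fin d)) (hX : X = fun ω => M ω + σ • ε ω)
    (hXmeas : StronglyMeasurable[𝒢] X)
    (abar : ℝ) (habar : abar = 1 / (σ ^ 2 + 1))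
    (Y : Ω → EuclideanSpace ℝ (Fin d)) (hY : Y = fun ω => Real.sqrt abar • X ω) :
    ∀ᵐ ω ∂μ,
      (1 / Real.sqrt abar) • (Y ω - Real.sqrt (1 - abar) • (μ[ε | 𝒢]) ω)
          = X ω - σ • (μ[ε | 𝒢]) ω
        ∧ X ω - σ • (μ[ε | 𝒢]) ω = (μ[M | 𝒢]) ω := by
  subst hX hY habar
  have hsqrt : √(1 / (σ ^ 2 + 1)) ≠ 0 := by positivity
  filter_upwards [condExp_eq_add_smul_sub_smul_condExp h𝒢 σ hM hε hXmeas] with ω hω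
  refine ⟨?_, hω.symm⟩
  rw [Real.sqrt_one_sub_one_div_sq_add_one hσ.le]
  exact one_div_smul_smul_sub_mul_smul hsqrt σ _ _
end
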